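/- Let G be the finite metric graph with two vertices v and w, one edge e₁ of length π joining v and w, and one loop e₂ of length 1 attached at w. Then λ = 4π² is a resonance of G, and G has no resonance in the interval (0, 4π²); that is, 4π² is the smallest real resonance of G. -/

import Mathlib

open Real Set Filter Topology

noncomputable section

/-- A finite metric graph: finite vertex and edge sets, each edge `e` has an initial
vertex `o e`, a terminal vertex `t e` and a positive length `L e`, and is identified
with the interval `[0, L e]`.  Every vertex is an endpoint of some edge. -/
structure MetricGraph where
  V : Type
  E : Type
  [fintV : Fintype V]
  [fintE : Fintype E]
  [decV : DecidableEq V]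
  [decE : DecidableEq E]
  o : E → V
  t : E → V
  L : E → ℝ
  L_pos : ∀ e, 0 < L e
  noIsolated : ∀ v, ∃ e, o e = v ∨ t e = v

attribute [instance] MetricGraph.fintV MetricGraph.fintE MetricGraph.decV MetricGraph.decE

namespace MetricGraph

variable (G : MetricGraph)

/-- The source vertex of edge `e` traversed in direction `d`. -/
def esrc (e : G.E) (d : Bool) : G.V := if d then G.o e else G.t e

/-- The destination vertex of edge `e` traversed in direction `d`. -/
def edst (e : G.E) (d : Bool) : G.V := if d then G.t e else G.o e

/-- A cycle in a metric graph: a closed walk which uses no edge twice and repeats no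
vertex except that its initial and terminal vertices coincide. -/
structure Cycle where
  n : ℕ
  npos : 0 < n
  edge : Fin n → G.E
  dir : Fin n → Bool
  edge_inj : Function.Injective edge
  vert_inj : Function.Injective fun i => G.esrc (edge i) (dir i)
  chain : ∀ i : Fin n,
    G.edst (edge i) (dir i) =
      G.esrc (edge ⟨((i : ℕ) + 1) % n, Nat.mod_lt _ npos⟩)
        (dir ⟨((i : ℕ) + 1) % n, Nat.mod_lt _ npos⟩)

/-- The length of a cycle: the sum of the lengths of its edges. -/
def Cycle.length {G : MetricGraph} (c : G.Cycle) : ℝ := ∑ i, G.L (c.edge i)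

/-- The cycle `c` lies in the subgraph given by the edge set `S`. -/
def Cycle.inSub {G : MetricGraph} (c : G.Cycle) (S : Set G.E) : Prop := ∀ i, c.edge i ∈ S

/-- The cycle `c` has odd length with respect to `x`: its length is an odd multiple of `x`. -/
def Cycle.oddLength {G : MetricGraph} (c : G.Cycle) (x : ℝ) : Prop :=
  ∃ m : ℕ, Odd m ∧ c.length = m * x

/-- The initial vertex of a cycle. -/
def Cycle.start {G : MetricGraph} (c : G.Cycle) : G.V :=
  G.esrc (c.edge ⟨0, c.npos⟩) (c.dir ⟨0, c.npos⟩)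

/-- The vertices incident to an edge of the edge set `S`, i.e. the vertex set of the
subgraph generated by `S`. -/
def incVerts (S : Set G.E) : Set G.V := {v | ∃ e ∈ S, G.o e = v ∨ G.t e = v}

/-- Two vertices are related iff they are connected through edges of `S`. -/
def connRel (S : Set G.E) : G.V → G.V → Prop :=
  Relation.EqvGen fun v w => ∃ e ∈ S, G.o e = v ∧ G.t e = w

/-- The connected component of the vertex `v` in the subgraph given by `S`. -/
def component (S : Set G.E) (v : G.V) : Set G.V := {w | G.connRel S v w}

/-- The number of connected components of the subgraph given by the edge set `S`. -/
def beta0 (S : Set G.E) : ℕ := (G.component S '' G.incVerts S).ncard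

/-- The first Betti number `|E| - |V| + β₀` of the subgraph given by the edge set `S`. -/
def beta1 (S : Set G.E) : ℤ :=
  (S.ncard : ℤ) - ((G.incVerts S).ncard : ℤ) + (G.beta0 S : ℤ)

/-- The number of connected components of the subgraph given by `S` which contain a
cycle of odd length with respect to `x`. -/
def beta0odd (S : Set G.E) (x : ℝ) : ℕ :=
  (G.component S '' {v | v ∈ G.incVerts S ∧
    ∃ c : G.Cycle, c.inSub S ∧ c.oddLength x ∧ G.connRel S v c.start}).ncard

/-- The edge set of the subgraph `G_λ`: all edges whose length is a positive integer
multiple of `π / √λ`. -/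
def lamEdges (lam : ℝ) : Set G.E :=
  {e | ∃ k : ℕ, 0 < k ∧ G.L e = k * (π / Real.sqrt lam)}

/-- An edgewise given function is continuous at all the vertices of `G`. -/
def ContVert (f : G.E → ℝ → ℂ) : Prop :=
  (∀ e₁ e₂, G.o e₁ = G.o e₂ → f e₁ 0 = f e₂ 0) ∧
  (∀ e₁ e₂, G.o e₁ = G.t e₂ → f e₁ 0 = f e₂ (G.L e₂)) ∧
  (∀ e₁ e₂, G.t e₁ = G.t e₂ → f e₁ (G.L e₁) = f e₂ (G.L e₂))

/-- The value of an (edgewise given, vertex-continuous) function at the vertex `v`. -/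
def vtxVal (f : G.E → ℝ → ℂ) (v : G.V) : ℂ :=
  if h : ∃ e, G.o e = v then f h.choose 0
  else f (G.noIsolated v).choose (G.L ((G.noIsolated v).choose))

/-- `∂_ν f (v)`: the sum of the derivatives at the vertex `v` of the restrictions of
`f` to the edges incident to `v`, all pointing towards `v`. -/
def normDer (f : G.E → ℝ → ℂ) (v : G.V) : ℂ :=
  (∑ e ∈ Finset.univ.filter fun e => G.t e = v, deriv (f e) (G.L e)) -
    ∑ e ∈ Finset.univ.filter fun e => G.o e = v, deriv (f e) 0

/-- `f` solves `-f'' = μ f` on every edge and is continuous at the vertices.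
(A solution of `-f'' = μ f` on `[0, L e]` is identified with its unique extension to a
global solution on `ℝ`.) -/
def IsSol (mu : ℂ) (f : G.E → ℝ → ℂ) : Prop :=
  (∀ e, ContDiff ℝ 2 (f e)) ∧
  (∀ e, ∀ x : ℝ, deriv (deriv (f e)) x = -mu * f e x) ∧ G.ContVert f

/-- Membership in `ker (-Δ_G - λ)` for the Kirchhoff Laplacian `-Δ_G`. -/
def InKer (lam : ℝ) (f : G.E → ℝ → ℂ) : Prop :=
  G.IsSol (lam : ℂ) f ∧ ∀ v, G.normDer f v = 0

/-- `ker (-Δ_G - λ)` as a set of (edgewise given) functions. -/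
def kerSet (lam : ℝ) : Set (G.E → ℝ → ℂ) := {f | G.InKer lam f}

/-- `λ` is an eigenvalue of the Kirchhoff Laplacian `-Δ_G`. -/
def IsEigenvalue (lam : ℝ) : Prop := G.kerSet lam ≠ {0}

/-- `dim ker (-Δ_G - λ)`. -/
def dimKer (lam : ℝ) : ℕ := Module.finrank ℂ (Submodule.span ℂ (G.kerSet lam))

/-- The resonance eigenspace `R (G, λ)`: all elements of `ker (-Δ_G - λ)` vanishing at
every vertex of `G`. -/
def resSet (lam : ℝ) : Set (G.E → ℝ → ℂ) :=
  {f | G.InKer lam f ∧ ∀ e, f e 0 = 0 ∧ f e (G.L e) = 0}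

/-- `λ` is a (real) resonance of `G` iff `R (G, λ) ≠ {0}`. -/
def IsResonance (lam : ℝ) : Prop := G.resSet lam ≠ {0}

/-- `dim R (G, λ)`. -/
def dimRes (lam : ℝ) : ℕ := Module.finrank ℂ (Submodule.span ℂ (G.resSet lam))

/-- `R_B (G, λ)`: all elements of `ker (-Δ_G - λ)` vanishing at every vertex in `B`. -/
def resSetB (B : Set G.V) (lam : ℝ) : Set (G.E → ℝ → ℂ) :=
  {f | G.InKer lam f ∧ ∀ e, (G.o e ∈ B → f e 0 = 0) ∧ (G.t e ∈ B → f e (G.L e) = 0)}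

/-- `dim R_B (G, λ)`. -/
def dimResB (B : Set G.V) (lam : ℝ) : ℕ :=
  Module.finrank ℂ (Submodule.span ℂ (G.resSetB B lam))

/-- The degree of a vertex (a loop counts twice). -/
def degree (v : G.V) : ℕ := {e | G.o e = v}.ncard + {e | G.t e = v}.ncard

/-- The degree of a vertex inside the subgraph given by the edge set `S`. -/
def degreeIn (S : Set G.E) (v : G.V) : ℕ :=
  {e | e ∈ S ∧ G.o e = v}.ncard + {e | e ∈ S ∧ G.t e = v}.ncard

/-- The edge set of the core of `G`: the largest subgraph without vertices of degree one. -/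
def coreEdges : Set G.E := ⋃₀ {S : Set G.E | ∀ v, G.degreeIn S v ≠ 1}

/-- A boundary vertex is a vertex of degree one. -/
def IsBoundaryVertex (v : G.V) : Prop := G.degree v = 1

/-- A proper core vertex: all edges attached to it belong to the core of `G`. -/
def IsProperCoreVertex (v : G.V) : Prop :=
  ∀ e, G.o e = v ∨ G.t e = v → e ∈ G.coreEdges

/-- The defining property of the function `f^{(l)}` for the Titchmarsh--Weyl matrix:
`f` solves `-f'' = μ f` edgewise, is continuous at the vertices, and satisfies
`∂_ν f (v₀) = 1` and `∂_ν f (v) = 0` for all vertices `v ≠ v₀`. -/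
def IsTWsol (mu : ℂ) (v0 : G.V) (f : G.E → ℝ → ℂ) : Prop :=
  G.IsSol mu f ∧ G.normDer f v0 = 1 ∧ ∀ v, v ≠ v0 → G.normDer f v = 0

open scoped Classical in
/-- The Titchmarsh--Weyl matrix `M_B (μ)` with entries `(M_B (μ))_{k,l} = f^{(l)} (v_k)`
(defined via choice; junk if no `f^{(l)}` exists, i.e. at the eigenvalues). -/
def TW (B : Finset G.V) (mu : ℂ) : Matrix B B ℂ :=
  Matrix.of fun k l : B => if h : ∃ f, G.IsTWsol mu l f then G.vtxVal h.choose k else 0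

/-- The cycle `c` has commensurate edges: all ratios of edge lengths are rational. -/
def Commensurate (c : G.Cycle) : Prop :=
  ∀ i j, ∃ q : ℚ, G.L (c.edge i) = q * G.L (c.edge j)

/-- `u_C`: the maximal number such that the length of each edge of the cycle `c` is a
positive integer multiple of it. -/
def uC (c : G.Cycle) : ℝ :=
  sSup {u : ℝ | 0 < u ∧ ∀ i, ∃ k : ℕ, 0 < k ∧ G.L (c.edge i) = k * u}

/-- `λ_G := inf { π²/u_C² : C a cycle in G with commensurate edges }`, with value `+∞`
if there is no cycle with commensurate edges. -/
def lamThreshold : EReal :=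
  sInf {x : EReal | ∃ c : G.Cycle, G.Commensurate c ∧ x = ((π ^ 2 / (G.uC c) ^ 2 : ℝ) : EReal)}

end MetricGraph

section MatrixFun

variable {m : Type} [Fintype m]

/-- The matrix function `M` has a pole of order `n` at `λ`:
`lim_{z → λ} (z - λ)^n M(z)` exists and is nonzero, while
`lim_{z → λ} (z - λ)^(n+1) M(z) = 0`. -/
def hasPoleOrder (M : ℂ → Matrix m m ℂ) (lam : ℂ) (n : ℕ) : Prop :=
  (∃ A : Matrix m m ℂ, A ≠ 0 ∧
    Filter.Tendsto (fun z => (z - lam) ^ n • M z) (𝓝[≠] lam) (𝓝 A)) ∧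
  Filter.Tendsto (fun z => (z - lam) ^ (n + 1) • M z) (𝓝[≠] lam) (𝓝 0)

/-- `λ` is a pole of the matrix function `M`: `M` is analytic on a punctured
neighborhood of `λ` and has a pole of some order `n ≥ 1` at `λ`. -/
def isPole (M : ℂ → Matrix m m ℂ) (lam : ℂ) : Prop :=
  (∀ᶠ z in 𝓝[≠] lam, ∀ k l, AnalyticAt ℂ (fun w => M w k l) z) ∧
  ∃ n : ℕ, 1 ≤ n ∧ hasPoleOrder M lam n

open scoped Classical in
/-- `Res_λ M := (2πi)⁻¹ ∮_Γ M(μ) dμ`, computed entrywise over a sufficiently small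
positively oriented circle `Γ` centered at `λ` (defined via choice as the common value
of the circle integrals over all sufficiently small radii). -/
def matResidue (M : ℂ → Matrix m m ℂ) (lam : ℂ) : Matrix m m ℂ :=
  Matrix.of fun k l =>
    if h : ∃ c : ℂ, ∀ᶠ R in 𝓝[>] (0 : ℝ),
        (2 * (π : ℂ) * Complex.I)⁻¹ * circleIntegral (fun z => M z k l) lam R = c
    then h.choose else 0

end MatrixFun

/-- The metric graph of Example `ex:loop`: two vertices `v = 0` and `w = 1`, one edge
`e₁ = 0` of length `π` from `v` to `w`, and one loop `e₂ = 1` of length `1` at `w`. -/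
def loopGraph : MetricGraph where
  V := Fin 2
  E := Fin 2
  o := ![0, 1]
  t := ![1, 1]
  L := ![π, 1]
  L_pos := by
    intro e
    fin_cases e <;> simp [Real.pi_pos]
  noIsolated := by
    intro v
    fin_cases v
    · exact ⟨0, Or.inl rfl⟩
    · exact ⟨1, Or.inl rfl⟩

/-!
On each edge a resonance function solves `-f'' = λ f` and vanishes at the initial vertex, so
with `ω = √λ` it is `f'(0) sin(ωx) / ω`, with derivative `f'(0) cos(ωx)`. The Kirchhoff
condition at the pendant vertex `v` kills `f` on `e₁`; the one at `w` then reads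
`f'(0) (cos ω - 1) = 0` on the loop, which for `0 < ω < 2π` kills `f` there too.
At `ω = 2π`, `sin(2πx)` on the loop and `0` on `e₁` is a resonance function.
-/

section HarmonicOscillator

lemma hasDerivAt_sin_mul_ofReal (ω : ℂ) (x : ℝ) :
    HasDerivAt (fun y : ℝ => Complex.sin (ω * y)) (ω * Complex.cos (ω * x)) x := by
  simpa [mul_comm] using
    ((Complex.hasDerivAt_sin _).comp _ ((hasDerivAt_id (x : ℂ)).const_mul ω)).comp_ofReal

lemma hasDerivAt_cos_mul_ofReal (ω : ℂ) (x : ℝ) :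
    HasDerivAt (fun y : ℝ => Complex.cos (ω * y)) (-ω * Complex.sin (ω * x)) x := by
  simpa [mul_comm] using
    ((Complex.hasDerivAt_cos _).comp _ ((hasDerivAt_id (x : ℂ)).const_mul ω)).comp_ofReal

lemma contDiff_sin_mul_ofReal (ω : ℂ) : ContDiff ℝ 2 (fun y : ℝ => Complex.sin (ω * y)) :=
  (Complex.contDiff_sin.comp (contDiff_const.mul contDiff_id)).restrict_scalars ℝ |>.comp
    Complex.ofRealCLM.contDiff

lemma deriv_deriv_sin_mul_ofReal (ω : ℂ) (x : ℝ) :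
    deriv (deriv fun y : ℝ => Complex.sin (ω * y)) x = -ω ^ 2 * Complex.sin (ω * x) := by
  rw [funext fun y => (hasDerivAt_sin_mul_ofReal ω y).deriv,
    ((hasDerivAt_cos_mul_ofReal ω x).const_mul ω).deriv]
  ring

variable {ω : ℂ} {g : ℝ → ℂ}

lemma first_integrals_of_deriv_deriv_eq_neg_sq_mul (hg : ContDiff ℝ 2 g)
    (hode : ∀ x, deriv (deriv g) x = -ω ^ 2 * g x) (x : ℝ) :
    deriv g x * Complex.cos (ω * x) + ω * g x * Complex.sin (ω * x) = deriv g 0 ∧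
    ω * g x * Complex.cos (ω * x) - deriv g x * Complex.sin (ω * x) = ω * g 0 := by
  have hg' (y : ℝ) : HasDerivAt g (deriv g y) y :=
    ((hg.differentiable two_ne_zero) y).hasDerivAt
  have hg'' (y : ℝ) : HasDerivAt (deriv g) (-ω ^ 2 * g y) y :=
    hode y ▸ (hg.differentiable_deriv_two y).hasDerivAt
  have hu (y : ℝ) : HasDerivAt
      (fun y : ℝ => deriv g y * Complex.cos (ω * y) + ω * g y * Complex.sin (ω * y)) 0 y := by
    refine (((hg'' y).mul (hasDerivAt_cos_mul_ofReal ω y)).add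
      (((hg' y).const_mul ω).mul (hasDerivAt_sin_mul_ofReal ω y))).congr_deriv ?_
    ring
  have hw (y : ℝ) : HasDerivAt
      (fun y : ℝ => ω * g y * Complex.cos (ω * y) - deriv g y * Complex.sin (ω * y)) 0 y := by
    refine ((((hg' y).const_mul ω).mul (hasDerivAt_cos_mul_ofReal ω y)).sub
      ((hg'' y).mul (hasDerivAt_sin_mul_ofReal ω y))).congr_deriv ?_
    ring
  constructor
  · simpa using is_const_of_deriv_eq_zero (fun y => (hu y).differentiableAt)
      (fun y => (hu y).deriv) x 0
  · simpa using is_const_of_deriv_eq_zero (fun y => (hw y).differentiableAt)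
      (fun y => (hw y).deriv) x 0

lemma deriv_eq_of_deriv_deriv_eq_neg_sq_mul (hg : ContDiff ℝ 2 g)
    (hode : ∀ x, deriv (deriv g) x = -ω ^ 2 * g x) (x : ℝ) :
    deriv g x = deriv g 0 * Complex.cos (ω * x) - ω * g 0 * Complex.sin (ω * x) := by
  obtain ⟨hu, hw⟩ := first_integrals_of_deriv_deriv_eq_neg_sq_mul hg hode x
  linear_combination Complex.cos (ω * x) * hu - Complex.sin (ω * x) * hw
    - deriv g x * Complex.sin_sq_add_cos_sq (ω * x)

lemma mul_eq_of_deriv_deriv_eq_neg_sq_mul (hg : ContDiff ℝ 2 g)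
    (hode : ∀ x, deriv (deriv g) x = -ω ^ 2 * g x) (x : ℝ) :
    ω * g x = deriv g 0 * Complex.sin (ω * x) + ω * g 0 * Complex.cos (ω * x) := by
  obtain ⟨hu, hw⟩ := first_integrals_of_deriv_deriv_eq_neg_sq_mul hg hode x
  linear_combination Complex.sin (ω * x) * hu + Complex.cos (ω * x) * hw
    - ω * g x * Complex.sin_sq_add_cos_sq (ω * x)

lemma eq_zero_of_deriv_deriv_eq_neg_sq_mul (hω : ω ≠ 0) (hg : ContDiff ℝ 2 g)
    (hode : ∀ x, deriv (deriv g) x = -ω ^ 2 * g x) (h0 : g 0 = 0) (h0' : deriv g 0 = 0) :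
    g = 0 := by
  funext x
  have := mul_eq_of_deriv_deriv_eq_neg_sq_mul hg hode x
  rw [h0, h0'] at this
  simpa [hω] using this

end HarmonicOscillator

namespace MetricGraph

variable (G : MetricGraph)

lemma contVert_of_forall_vanish {f : G.E → ℝ → ℂ} (hf : ∀ e, f e 0 = 0 ∧ f e (G.L e) = 0) :
    G.ContVert f := by
  refine ⟨fun e₁ e₂ _ => ?_, fun e₁ e₂ _ => ?_, fun e₁ e₂ _ => ?_⟩ <;> simp only [hf]

lemma zero_mem_resSet (lam : ℝ) : (0 : G.E → ℝ → ℂ) ∈ G.resSet lam := by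
  refine ⟨⟨⟨fun _ => contDiff_const, fun _ _ => ?_, G.contVert_of_forall_vanish ?_⟩, fun _ => ?_⟩,
    fun _ => ⟨rfl, rfl⟩⟩ <;> simp [normDer]

lemma isResonance_iff {lam : ℝ} : G.IsResonance lam ↔ ∃ f ∈ G.resSet lam, f ≠ 0 := by
  rw [IsResonance, Ne, Set.eq_singleton_iff_unique_mem]
  simp [G.zero_mem_resSet]

end MetricGraph

lemma loopGraph_normDer_zero (f : Fin 2 → ℝ → ℂ) :
    loopGraph.normDer f (0 : Fin 2) = -deriv (f 0) 0 := by
  -- `erw`: the `Fintype loopGraph.E` instance is only definitionally that of `Fin 2`.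
  erw [MetricGraph.normDer, Finset.sum_filter, Finset.sum_filter, Fin.sum_univ_two,
    Fin.sum_univ_two]
  simp [loopGraph]

lemma loopGraph_normDer_one (f : Fin 2 → ℝ → ℂ) :
    loopGraph.normDer f (1 : Fin 2) = deriv (f 0) π + deriv (f 1) 1 - deriv (f 1) 0 := by
  erw [MetricGraph.normDer, Finset.sum_filter, Finset.sum_filter, Fin.sum_univ_two,
    Fin.sum_univ_two]
  simp [loopGraph]

lemma loopGraph_sin_mem_resSet :
    (![0, fun x : ℝ => Complex.sin (2 * π * x)] : Fin 2 → ℝ → ℂ) ∈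
      loopGraph.resSet (4 * π ^ 2) := by
  have hsin : deriv (fun x : ℝ => Complex.sin (2 * π * x)) =
      fun x : ℝ => 2 * π * Complex.cos (2 * π * x) :=
    funext fun x => (hasDerivAt_sin_mul_ofReal _ x).deriv
  refine ⟨⟨⟨fun e => ?smooth, fun e x => ?ode, loopGraph.contVert_of_forall_vanish ?vanish⟩,
    ?kirchhoff⟩, ?vanish⟩
  case smooth =>
    fin_cases e
    exacts [contDiff_const, contDiff_sin_mul_ofReal _]
  case ode =>
    fin_cases e
    · simp
    · simp only [Fin.mk_one, Matrix.cons_val_one, Matrix.cons_val_zero, deriv_deriv_sin_mul_ofReal]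
      push_cast
      ring
  case kirchhoff =>
    show ∀ v : Fin 2, _
    simp [Fin.forall_fin_two, loopGraph_normDer_zero, loopGraph_normDer_one, hsin,
      Complex.cos_two_pi]
  case vanish =>
    show ∀ e : Fin 2, _
    simp [Fin.forall_fin_two, loopGraph, Complex.sin_two_pi]

lemma loopGraph_eq_zero_of_mem_resSet {lam : ℝ} (hpos : 0 < lam) (hlt : lam < 4 * π ^ 2)
    {f : Fin 2 → ℝ → ℂ} (hf : f ∈ loopGraph.resSet lam) : f = 0 := by
  have hsmooth : ∀ e : Fin 2, ContDiff ℝ 2 (f e) := hf.1.1.1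
  have hvan : ∀ e : Fin 2, f e 0 = 0 := fun e => (hf.2 e).1
  have hkirchhoff : ∀ v : Fin 2, loopGraph.normDer f v = 0 := hf.1.2
  set ω : ℂ := ((√lam : ℝ) : ℂ) with hω
  have hω0 : ω ≠ 0 := Complex.ofReal_ne_zero.2 (Real.sqrt_pos.2 hpos).ne'
  have hode (e : Fin 2) (x : ℝ) : deriv (deriv (f e)) x = -ω ^ 2 * f e x := by
    rw [hf.1.1.2.1 e x, hω, ← Complex.ofReal_pow, Real.sq_sqrt hpos.le]
  have hcos : Complex.cos ω ≠ 1 := by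
    have hsqrt : √lam < 2 * π := by
      rw [Real.sqrt_lt' (by positivity)]
      linarith
    rw [hω, ← Complex.ofReal_cos, Ne, Complex.ofReal_eq_one,
      Real.cos_eq_one_iff_of_lt_of_lt (by linarith [Real.pi_pos, Real.sqrt_nonneg lam]) hsqrt]
    exact (Real.sqrt_pos.2 hpos).ne'
  have hf0 : f 0 = 0 := by
    refine eq_zero_of_deriv_deriv_eq_neg_sq_mul hω0 (hsmooth 0) (hode 0) (hvan 0) ?_
    simpa [loopGraph_normDer_zero] using hkirchhoff 0
  have hloop : deriv (f 1) 1 = deriv (f 1) 0 * Complex.cos ω := by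
    simpa [hvan 1] using deriv_eq_of_deriv_deriv_eq_neg_sq_mul (hsmooth 1) (hode 1) 1
  have hf1_deriv : deriv (f 1) 0 = 0 := by
    have := hkirchhoff 1
    rw [loopGraph_normDer_one, hf0, hloop, deriv_zero, Pi.zero_apply, zero_add] at this
    exact (mul_eq_zero.1 (by linear_combination this)).resolve_right (sub_ne_zero.2 hcos)
  ext e : 1
  fin_cases e
  exacts [hf0, eq_zero_of_deriv_deriv_eq_neg_sq_mul hω0 (hsmooth 1) (hode 1) (hvan 1) hf1_deriv]

/-- for the loop graph of Example `ex:loop`, `λ = 4π²` is a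
resonance, and there is no resonance in `(0, 4π²)`; that is, `4π²` is the smallest real
resonance. -/
theorem statement_16 :
    loopGraph.IsResonance (4 * π ^ 2) ∧
    ∀ lam : ℝ, 0 < lam → lam < 4 * π ^ 2 → ¬ loopGraph.IsResonance lam := by
  refine ⟨loopGraph.isResonance_iff.2 ⟨_, loopGraph_sin_mem_resSet, fun h => ?_⟩,
    fun lam hpos hlt => ?_⟩
  · have hquarter := congr_fun (congr_fun h 1) (1 / 4)
    have hx : 2 * (π : ℂ) * ((1 / 4 : ℝ) : ℂ) = π / 2 := by push_cast; ring
    simp only [Matrix.cons_val_one, Matrix.cons_val_zero, hx,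
      Complex.sin_pi_div_two] at hquarter
    exact one_ne_zero hquarter
  · rw [loopGraph.isResonance_iff]
    rintro ⟨f, hf, hne⟩
    exact hne (loopGraph_eq_zero_of_mem_resSet hpos hlt hf)
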